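/- arXiv:2106.14453 — 5 statements merged into one kernel-verified Lean document; each statement's English description precedes it below -/
import Mathlib

section
/- Let k be a field of characteristic 0 and consider the pencil σ = (2x_0x_2, 2x_0x_1 + x_3²) in k[x_0,x_1,x_2,x_3]. Then the kernel of the Jacobian matrix of σ, as a submodule of R^4, is free of rank 2 generated by the columns of the matrix with rows (x_0, 0), (−x_1, −x_3), (−x_2, 0), (0, x_0); i.e., both generators have degree 1 and these two syzygies generate the full syzygy module of the Jacobian matrix. -/
/-!
Up to the unit 2, a syzygy `v` satisfies `x₂v₀ + x₀v₂ = 0` and `x₁v₀ + x₀v₁ + x₃v₃ = 0`.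
Since `x₀` is prime and divides neither `x₂` nor `x₃`, the first equation forces
`v₀ = x₀p`, `v₂ = -x₂p`, and then the second forces `v₃ = x₀q`, `v₁ = -x₁p - x₃q`.
Linear independence is read off the coordinates `0` and `3`, where the two generators
are `(x₀, 0)` and `(0, x₀)`.
-/

open MvPolynomial

theorem Prime.exists_eq_mul_of_mul_add_mul_eq_zero {R : Type*} [CommRing R] [NoZeroDivisors R]
    {p a b c : R} (hp : Prime p) (ha : ¬ p ∣ a) (h : a * b + p * c = 0) :
    ∃ q, b = p * q ∧ c = -(a * q) := by
  have hab : p ∣ a * b := ⟨-c, by linear_combination h⟩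
  obtain ⟨q, rfl⟩ := (hp.dvd_mul.mp hab).resolve_left ha
  have hpq : p * (c + a * q) = 0 := by linear_combination h
  exact ⟨q, rfl, by linear_combination (mul_eq_zero.mp hpq).resolve_left hp.ne_zero⟩

noncomputable section

namespace Pencil

variable (k : Type*) [Field k]

def jacobian : Matrix (Fin 2) (Fin 4) (MvPolynomial (Fin 4) k) :=
  Matrix.of ![![2 * X 2, 0, 2 * X 0, 0], ![2 * X 1, 2 * X 0, 0, 2 * X 3]]

def syz₁ : Fin 4 → MvPolynomial (Fin 4) k := ![X 0, -X 1, -X 2, 0]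

def syz₂ : Fin 4 → MvPolynomial (Fin 4) k := ![0, -X 3, 0, X 0]

variable {k}

theorem mem_ker_jacobian_iff (h2 : (2 : k) ≠ 0) (v : Fin 4 → MvPolynomial (Fin 4) k) :
    v ∈ LinearMap.ker (jacobian k).mulVecLin ↔
      X 2 * v 0 + X 0 * v 2 = 0 ∧ X 1 * v 0 + X 0 * v 1 + X 3 * v 3 = 0 := by
  have h2' : (2 : MvPolynomial (Fin 4) k) ≠ 0 := by
    rw [← map_ofNat C 2]
    exact (map_ne_zero_iff _ (C_injective _ _)).mpr h2
  rw [LinearMap.mem_ker, _root_.funext_iff, Fin.forall_fin_two]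
  simp only [jacobian, Matrix.mulVecLin_apply, Matrix.mulVec, dotProduct, Fin.sum_univ_four,
    Matrix.of_apply, Matrix.cons_val, Pi.zero_apply]
  refine and_congr ⟨fun h ↦ ?_, fun h ↦ ?_⟩ ⟨fun h ↦ ?_, fun h ↦ ?_⟩
  · exact (mul_eq_zero.mp (by linear_combination h)).resolve_left h2'
  · linear_combination 2 * h
  · exact (mul_eq_zero.mp (by linear_combination h)).resolve_left h2'
  · linear_combination 2 * h

theorem ker_jacobian_eq_span (h2 : (2 : k) ≠ 0) :
    LinearMap.ker (jacobian k).mulVecLin =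
      Submodule.span (MvPolynomial (Fin 4) k) {syz₁ k, syz₂ k} := by
  have hX0 : Prime (X 0 : MvPolynomial (Fin 4) k) := X_prime
  refine le_antisymm (fun v hv ↦ ?_) ?_
  · obtain ⟨h₁, h₂⟩ := (mem_ker_jacobian_iff h2 v).mp hv
    obtain ⟨p, hv0, hv2⟩ := hX0.exists_eq_mul_of_mul_add_mul_eq_zero (by simp) h₁
    obtain ⟨q, hv3, hv1⟩ := hX0.exists_eq_mul_of_mul_add_mul_eq_zero (a := X 3) (b := v 3)
      (c := X 1 * p + v 1) (by simp) (by linear_combination h₂ - X 1 * hv0)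
    have hv1' : v 1 = -(X 1 * p) - X 3 * q := by linear_combination hv1
    refine Submodule.mem_span_pair.mpr ⟨p, q, funext fun i ↦ ?_⟩
    fin_cases i <;> simp [syz₁, syz₂, hv0, hv1', hv2, hv3] <;> ring
  · rw [Submodule.span_le]
    rintro v (rfl | rfl) <;> refine (mem_ker_jacobian_iff h2 _).mpr ⟨?_, ?_⟩ <;>
      simp [syz₁, syz₂] <;> ring

theorem linearIndependent_syz :
    LinearIndependent (MvPolynomial (Fin 4) k) ![syz₁ k, syz₂ k] := by
  refine LinearIndependent.pair_iff.mpr fun s t hst ↦ ⟨?_, ?_⟩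
  · simpa [syz₁, syz₂] using congrFun hst 0
  · simpa [syz₁, syz₂] using congrFun hst 3

end Pencil

end

/-- For the pencil `σ = (2x₀x₂, 2x₀x₁ + x₃²)`, the kernel of the Jacobian
matrix is free of rank 2, generated by the two degree-1 syzygies
`(x₀, −x₁, −x₂, 0)` and `(0, −x₃, 0, x₀)`. -/
theorem stmt_8 {k : Type*} [Field k] [CharZero k] :
    LinearMap.ker
        ((Matrix.of
          ![![2 * X 2, 0, 2 * X 0, 0],
            ![2 * X 1, 2 * X 0, 0, 2 * X 3]] :
          Matrix (Fin 2) (Fin 4) (MvPolynomial (Fin 4) k)).mulVecLin) =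
      Submodule.span (MvPolynomial (Fin 4) k)
        ({![X 0, -X 1, -X 2, 0], ![0, -X 3, 0, X 0]} :
          Set (Fin 4 → MvPolynomial (Fin 4) k)) ∧
    LinearIndependent (MvPolynomial (Fin 4) k)
      ![(![X 0, -X 1, -X 2, 0] : Fin 4 → MvPolynomial (Fin 4) k),
        ![0, -X 3, 0, X 0]] :=
  ⟨Pencil.ker_jacobian_eq_span two_ne_zero, Pencil.linearIndependent_syz⟩
end

section
/- Let k be a field of characteristic 0 and let σ = (x_0x_1, g) in R = k[x_0,x_1,x_2,x_3], where g is homogeneous of degree 3 depending only on x_2, x_3 and such that ∂g/∂x_2 and ∂g/∂x_3 have no common factor of positive degree. Then the kernel of the Jacobian matrix of σ is a free R-module of rank 2 generated by ν_1 = (−x_0, x_1, 0, 0) and ν_2 = (0, 0, ∂g/∂x_3, −∂g/∂x_2), of degrees 1 and 2 respectively. -/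
/-!
The Jacobian matrix is block diagonal with rows `(x₁, x₀)` and `(∂g/∂x₂, ∂g/∂x₃)`, and each row
is a pair of relatively prime elements of the factorial ring `k[x₀, …, x₃]`. If `a, b` are
relatively prime and `a x + b y = 0`, then `b ∣ a x` forces `b ∣ x`, so `(x, y)` is a multiple of
`(b, -a)`. Hence the kernel is spanned by one syzygy per block, and these two syzygies are
independent because they live in complementary coordinates and neither vanishes.
-/

open MvPolynomial

section BlockRows

variable {R : Type*} [CommRing R]

theorem Matrix.mulVec_blockRows_eq_zero_iff (a b c d : R) (v : Fin 4 → R) :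
    (Matrix.of ![![a, b, 0, 0], ![0, 0, c, d]]).mulVec v = 0 ↔
      a * v 0 + b * v 1 = 0 ∧ c * v 2 + d * v 3 = 0 := by
  simp [_root_.funext_iff, Fin.forall_fin_two, dotProduct, Fin.sum_univ_four]

variable [IsDomain R]

theorem IsRelPrime.eq_zero_of_mul_eq_zero {a b s : R} (hab : IsRelPrime a b)
    (ha : s * a = 0) (hb : s * b = 0) : s = 0 := by
  rcases hab.ne_zero_or_ne_zero with ha' | hb'
  · exact (mul_eq_zero.1 ha).resolve_right ha'
  · exact (mul_eq_zero.1 hb).resolve_right hb'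

theorem linearIndependent_blockSyzygies_of_isRelPrime {a b c d : R} (hab : IsRelPrime a b)
    (hcd : IsRelPrime c d) :
    LinearIndependent R ![![-b, a, 0, 0], ![0, 0, d, -c]] := by
  refine LinearIndependent.pair_iff.2 fun s t hst => ?_
  have h i := congrFun hst i
  have hsb : s * b = 0 := by simpa using h 0
  have hsa : s * a = 0 := by simpa using h 1
  have htd : t * d = 0 := by simpa using h 2
  have htc : t * c = 0 := by simpa using h 3
  exact ⟨hab.eq_zero_of_mul_eq_zero hsa hsb, hcd.eq_zero_of_mul_eq_zero htc htd⟩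

variable [DecompositionMonoid R]

theorem IsRelPrime.exists_eq_of_mul_add_mul_eq_zero {a b x y : R} (hab : IsRelPrime a b)
    (h : a * x + b * y = 0) : ∃ c, x = c * b ∧ y = -(c * a) := by
  rcases eq_or_ne b 0 with rfl | hb
  · obtain ⟨u, rfl⟩ := isRelPrime_zero_right.1 hab
    have hx : x = 0 := by simpa using h
    exact ⟨-(y * ↑u⁻¹), by simp [hx], by simp [mul_assoc]⟩
  · obtain ⟨c, rfl⟩ : b ∣ x := hab.symm.dvd_of_dvd_mul_left ⟨-y, by linear_combination h⟩
    refine ⟨c, mul_comm b c, mul_left_cancel₀ hb ?_⟩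
    linear_combination h

theorem ker_mulVecLin_blockRows_of_isRelPrime {a b c d : R} (hab : IsRelPrime a b)
    (hcd : IsRelPrime c d) :
    LinearMap.ker (Matrix.of ![![a, b, 0, 0], ![0, 0, c, d]]).mulVecLin =
      Submodule.span R {![-b, a, 0, 0], ![0, 0, d, -c]} := by
  apply le_antisymm
  · intro v hv
    rw [LinearMap.mem_ker, Matrix.mulVecLin_apply, Matrix.mulVec_blockRows_eq_zero_iff] at hv
    obtain ⟨s, hs0, hs1⟩ := hab.exists_eq_of_mul_add_mul_eq_zero hv.1
    obtain ⟨t, ht2, ht3⟩ := hcd.exists_eq_of_mul_add_mul_eq_zero hv.2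
    refine Submodule.mem_span_pair.2 ⟨-s, t, funext fun i => ?_⟩
    fin_cases i <;> simp [hs0, hs1, ht2, ht3]
  · rw [Submodule.span_le]
    rintro v (rfl | rfl) <;>
      simp only [SetLike.mem_coe, LinearMap.mem_ker, Matrix.mulVecLin_apply,
        Matrix.mulVec_blockRows_eq_zero_iff] <;> simp [mul_comm]

end BlockRows

theorem stmt_10_general {k : Type*} [Field k]
    (g : MvPolynomial (Fin 4) k)
    (hcop : ∀ p : MvPolynomial (Fin 4) k,
      p ∣ pderiv 2 g → p ∣ pderiv 3 g → IsUnit p) :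
    LinearMap.ker
        ((Matrix.of
          ![![X 1, X 0, 0, 0],
            ![0, 0, pderiv 2 g, pderiv 3 g]] :
          Matrix (Fin 2) (Fin 4) (MvPolynomial (Fin 4) k)).mulVecLin) =
      Submodule.span (MvPolynomial (Fin 4) k)
        ({![-X 0, X 1, 0, 0], ![0, 0, pderiv 3 g, -(pderiv 2 g)]} :
          Set (Fin 4 → MvPolynomial (Fin 4) k)) ∧
    LinearIndependent (MvPolynomial (Fin 4) k)
      ![(![-X 0, X 1, 0, 0] : Fin 4 → MvPolynomial (Fin 4) k),
        ![0, 0, pderiv 3 g, -(pderiv 2 g)]] := by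
  have hX : IsRelPrime (X 1 : MvPolynomial (Fin 4) k) (X 0) :=
    X_prime.irreducible.isRelPrime_iff_not_dvd.2 (by rw [X_dvd_X]; decide)
  exact ⟨ker_mulVecLin_blockRows_of_isRelPrime hX hcop,
    linearIndependent_blockSyzygies_of_isRelPrime hX hcop⟩

/-- For `σ = (x₀x₁, g)` with `g` a cubic in `x₂,x₃` only whose partials are
coprime, the kernel of the Jacobian matrix is free of rank 2, generated by
`ν₁ = (−x₀, x₁, 0, 0)` (degree 1) and `ν₂ = (0, 0, ∂g/∂x₃, −∂g/∂x₂)` (degree 2). -/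
theorem stmt_10 {k : Type*} [Field k] [CharZero k]
    (g : MvPolynomial (Fin 4) k) (hg : g.IsHomogeneous 3)
    (h0 : pderiv 0 g = 0) (h1 : pderiv 1 g = 0)
    (hcop : ∀ p : MvPolynomial (Fin 4) k,
      p ∣ pderiv 2 g → p ∣ pderiv 3 g → IsUnit p) :
    LinearMap.ker
        ((Matrix.of
          ![![X 1, X 0, 0, 0],
            ![0, 0, pderiv 2 g, pderiv 3 g]] :
          Matrix (Fin 2) (Fin 4) (MvPolynomial (Fin 4) k)).mulVecLin) =
      Submodule.span (MvPolynomial (Fin 4) k)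
        ({![-X 0, X 1, 0, 0], ![0, 0, pderiv 3 g, -(pderiv 2 g)]} :
          Set (Fin 4 → MvPolynomial (Fin 4) k)) ∧
    LinearIndependent (MvPolynomial (Fin 4) k)
      ![(![-X 0, X 1, 0, 0] : Fin 4 → MvPolynomial (Fin 4) k),
        ![0, 0, pderiv 3 g, -(pderiv 2 g)]] :=
  stmt_10_general g hcop
end

section
/- Let k be a field of characteristic 0. For the sequence σ' = (x_0x_1, x_0²x_1 + g) in R = k[x_0,x_1,x_2,x_3] with g homogeneous of degree 3 in x_2, x_3 only and ∂g/∂x_2, ∂g/∂x_3 coprime, the Jacobian matrix of σ' has no nonzero syzygy of degree ≤ 1; that is, no nonzero vector (a_0,a_1,a_2,a_3) of homogeneous polynomials of degree ≤ 1 satisfies the two relations a_0x_1 + a_1x_0 = 0 and 2a_0x_0x_1 + a_1x_0² + a_2·∂g/∂x_2 + a_3·∂g/∂x_3 = 0. -/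
/-!
Subtracting `x₀` times the first relation from the second leaves
`a₀x₀x₁ + a₂g₂ + a₃g₃ = 0`, where `gᵢ = ∂g/∂xᵢ` are coprime quadrics in `x₂, x₃`.
A relation `b₂g₂ + b₃g₃ = 0` with `deg bᵢ < 2` forces `b₂ = b₃ = 0`, because `g₃ ∣ b₂`.
Differentiating in `x₀` or `x₁` and then setting `x₀ = x₁ = 0` gives such a relation between
the constants `∂a₂, ∂a₃`, so `a₂` and `a₃` involve neither `x₀` nor `x₁`; setting
`x₀ = x₁ = 0` in the relation itself then gives `a₂ = a₃ = 0`, and `a₀ = a₁ = 0` follow.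
-/

open MvPolynomial

namespace MvPolynomial

variable {σ : Type*}

theorem vars_pderiv_subset {R : Type*} [CommSemiring R] (i : σ) (p : MvPolynomial σ R) :
    (pderiv i p).vars ⊆ p.vars := by
  classical
  intro k hk
  obtain ⟨d, hd, hdk⟩ := (mem_vars_iff_mem_support k).mp hk
  rw [mem_support_iff, coeff_pderiv] at hd
  refine (mem_vars_iff_mem_support k).mpr
    ⟨d + Finsupp.single i 1, mem_support_iff.mpr (left_ne_zero_of_mul hd), ?_⟩
  rw [Finsupp.mem_support_iff] at hdk ⊢
  rw [Finsupp.add_apply]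
  omega

theorem pderiv_eq_zero_iff_notMem_vars {R : Type*} [CommSemiring R] [NoZeroDivisors R]
    [CharZero R] {i : σ} {p : MvPolynomial σ R} : pderiv i p = 0 ↔ i ∉ p.vars := by
  refine ⟨fun h hi => ?_, pderiv_eq_zero_of_notMem_vars⟩
  obtain ⟨d, hd, hdi⟩ := (mem_vars_iff_mem_support i).mp hi
  have hd' : d - Finsupp.single i 1 + Finsupp.single i 1 = d :=
    tsub_add_cancel_of_le (Finsupp.single_le_iff.mpr (Nat.one_le_iff_ne_zero.mpr
      (Finsupp.mem_support_iff.mp hdi)))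
  have hcoeff := congr(coeff (d - Finsupp.single i 1) $h)
  rw [coeff_pderiv, hd', coeff_zero] at hcoeff
  exact mul_ne_zero (mem_support_iff.mp hd) (Nat.cast_add_one_ne_zero _) hcoeff

section IsDomain

variable {R : Type*} [CommRing R] [IsDomain R]

theorem IsHomogeneous.eq_zero_of_dvd {p q : MvPolynomial σ R} {m n : ℕ}
    (hp : p.IsHomogeneous m) (hq : q.IsHomogeneous n) (hmn : m < n) (hqp : q ∣ p) : p = 0 := by
  by_contra hp0
  have hq0 : q ≠ 0 := by rintro rfl; exact hp0 (zero_dvd_iff.mp hqp)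
  have := totalDegree_le_of_dvd_of_isDomain hqp hp0
  rw [hp.totalDegree hp0, hq.totalDegree hq0] at this
  omega

end IsDomain

section Field

variable {K : Type*} [Field K]

theorem eq_zero_of_isRelPrime_of_mul_add_mul_eq_zero {p q a b : MvPolynomial σ K} {m n : ℕ}
    (hp : p.IsHomogeneous n) (hq : q.IsHomogeneous n) (hpq : IsRelPrime p q)
    (ha : a.IsHomogeneous m) (hb : b.IsHomogeneous m) (hmn : m < n) (h : a * p + b * q = 0) :
    a = 0 ∧ b = 0 :=
  ⟨ha.eq_zero_of_dvd hq hmn <| hpq.symm.dvd_of_dvd_mul_right ⟨-b, by linear_combination h⟩,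
    hb.eq_zero_of_dvd hp hmn <| hpq.dvd_of_dvd_mul_right ⟨-a, by linear_combination h⟩⟩

theorem eq_zero_of_mul_X_mul_X_add_mul_add_mul_eq_zero [CharZero K] {i j : σ}
    {p q a b c : MvPolynomial σ K} {m n : ℕ}
    (hp : p.IsHomogeneous n) (hq : q.IsHomogeneous n) (hpq : IsRelPrime p q)
    (hpv : Disjoint (p.vars : Set σ) {i, j}) (hqv : Disjoint (q.vars : Set σ) {i, j})
    (ha : a.IsHomogeneous m) (hb : b.IsHomogeneous m) (hm : m ≤ 1) (hmn : m < n)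
    (h : c * (X i * X j) + a * p + b * q = 0) : a = 0 ∧ b = 0 := by
  classical
  set ψ := aeval (R := K) fun k ↦ if k ∈ ({i, j} : Set σ)ᶜ then X k else (0 : MvPolynomial σ K)
  have hψ_fix {r : MvPolynomial σ K} (hr : Disjoint (r.vars : Set σ) {i, j}) : ψ r = r :=
    aeval_ite_mem_eq_self r (Set.subset_compl_iff_disjoint_right.mpr hr)
  have hψi : ψ (X i) = 0 := by simp [ψ]
  have hψj : ψ (X j) = 0 := by simp [ψ]
  have hderiv : ∀ k ∈ ({i, j} : Set σ), pderiv k a = 0 ∧ pderiv k b = 0 := by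
    intro k hk
    have hpk : pderiv k p = 0 := pderiv_eq_zero_of_notMem_vars (Set.disjoint_right.mp hpv hk)
    have hqk : pderiv k q = 0 := pderiv_eq_zero_of_notMem_vars (Set.disjoint_right.mp hqv hk)
    have hconst {r : MvPolynomial σ K} (hr : r.IsHomogeneous m) : (pderiv k r).IsHomogeneous 0 :=
      Nat.sub_eq_zero_of_le hm ▸ hr.pderiv
    have hconst_fix {r : MvPolynomial σ K} (hr : r.IsHomogeneous 0) : ψ r = r := by
      rw [← totalDegree_zero_iff_isHomogeneous, totalDegree_eq_zero_iff_eq_C] at hr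
      rw [hr, aeval_C, algebraMap_eq]
    have hk := congr(ψ (pderiv k $h))
    simp only [map_add, map_mul, pderiv_mul, hpk, hqk, hψi, hψj, mul_zero, zero_mul, add_zero,
      zero_add, map_zero, hψ_fix hpv, hψ_fix hqv, hconst_fix (hconst ha), hconst_fix (hconst hb)]
      at hk
    exact eq_zero_of_isRelPrime_of_mul_add_mul_eq_zero hp hq hpq (hconst ha) (hconst hb)
      (by omega) hk
  have hfree {r : MvPolynomial σ K} (hr : ∀ k ∈ ({i, j} : Set σ), pderiv k r = 0) :
      Disjoint (r.vars : Set σ) {i, j} :=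
    Set.disjoint_right.mpr fun k hk ↦ pderiv_eq_zero_iff_notMem_vars.mp (hr k hk)
  have h' := congr(ψ $h)
  simp only [map_add, map_mul, hψi, hψj, mul_zero, zero_add, map_zero, hψ_fix hpv,
    hψ_fix hqv, hψ_fix (hfree fun k hk ↦ (hderiv k hk).1),
    hψ_fix (hfree fun k hk ↦ (hderiv k hk).2)] at h'
  exact eq_zero_of_isRelPrime_of_mul_add_mul_eq_zero hp hq hpq ha hb hmn h'

end Field

end MvPolynomial

/-- For `σ' = (x₀x₁, x₀²x₁ + g)` with `g` a cubic in `x₂,x₃` only whose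
partials are coprime, the Jacobian matrix of `σ'` has no nonzero syzygy of
degree ≤ 1. -/
theorem stmt_11 {k : Type*} [Field k] [CharZero k]
    (g : MvPolynomial (Fin 4) k) (hg : g.IsHomogeneous 3)
    (h0 : pderiv 0 g = 0) (h1 : pderiv 1 g = 0)
    (hcop : ∀ p : MvPolynomial (Fin 4) k,
      p ∣ pderiv 2 g → p ∣ pderiv 3 g → IsUnit p) :
    ∀ m ≤ 1, ∀ a : Fin 4 → MvPolynomial (Fin 4) k,
      (∀ i, (a i).IsHomogeneous m) →
      a 0 * X 1 + a 1 * X 0 = 0 →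
      a 0 * (2 * X 0 * X 1) + a 1 * X 0 ^ 2
        + a 2 * pderiv 2 g + a 3 * pderiv 3 g = 0 →
      a = 0 := by
  intro m hm a ha hE1 hE2
  have hfree (i : Fin 4) : Disjoint ((pderiv i g).vars : Set (Fin 4)) {0, 1} := by
    refine Set.disjoint_right.mpr fun j hj hji ↦ ?_
    have hj' : pderiv j g = 0 := by rcases hj with rfl | rfl <;> assumption
    exact pderiv_eq_zero_iff_notMem_vars.mp hj' (vars_pderiv_subset i g hji)
  have hE : a 0 * (X 0 * X 1) + a 2 * pderiv 2 g + a 3 * pderiv 3 g = 0 := by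
    linear_combination hE2 - X 0 * hE1
  obtain ⟨ha2, ha3⟩ := eq_zero_of_mul_X_mul_X_add_mul_add_mul_eq_zero hg.pderiv hg.pderiv hcop
    (hfree 2) (hfree 3) (ha 2) (ha 3) hm (by omega) hE
  have ha0 : a 0 = 0 := by simpa [ha2, ha3, X_ne_zero] using hE
  have ha1 : a 1 = 0 := by simpa [ha0, X_ne_zero] using hE1
  funext i
  fin_cases i <;> assumption
end

section
/- Consider f = x_0x_1^{k+2} + x_2^{k+3} + x_2^{k+2}x_3 and g = x_2x_3(x_2^{k+1} − x_1^{k+1}) in Q[x_0,x_1,x_2,x_3] for k ≥ 0. Then (f, g) is a regular sequence; equivalently, f and g have no common irreducible factor (both being nonzero and the variety V(f,g) having codimension 2). -/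
/-!
As a polynomial in `x₀`, `f = x₁^{k+2} x₀ + (x₂^{k+3} + x₂^{k+2} x₃)` is linear, while `g` is
a nonzero constant. A common factor is therefore free of `x₀` and divides both `x₁^{k+2}` and
`g`; but `x₁ ∤ g`, since `g` takes the value `1` at `x₁ = 0`, `x₂ = x₃ = 1`.
-/

open MvPolynomial

namespace Polynomial

theorem isRelPrime_C_mul_X_add_C_C {R : Type*} [CommRing R] [IsDomain R] {a b c : R}
    (hac : IsRelPrime a c) (hc : c ≠ 0) : IsRelPrime (C a * X + C b) (C c) := by
  intro d hd hdc
  have hdeg : d.natDegree = 0 := by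
    simpa using natDegree_le_of_dvd hdc (C_ne_zero.mpr hc)
  rw [eq_C_of_natDegree_eq_zero hdeg] at hd hdc ⊢
  have hda : d.coeff 0 ∣ a := by simpa using (C_dvd_iff_dvd_coeff _ _).mp hd 1
  have hdc' : d.coeff 0 ∣ c := by simpa using (C_dvd_iff_dvd_coeff _ _).mp hdc 0
  exact (hac hda hdc').map C

end Polynomial

/-- `f = x₀x₁^{k+2} + x₂^{k+3} + x₂^{k+2}x₃` and
`g = x₂x₃(x₂^{k+1} − x₁^{k+1})` form a regular sequence in `ℚ[x₀,…,x₃]`: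
they have no common (irreducible) factor of positive degree. -/
theorem stmt_15 (K : ℕ) :
    IsRelPrime
      (X 0 * X 1 ^ (K + 2) + X 2 ^ (K + 3) + X 2 ^ (K + 2) * X 3 :
        MvPolynomial (Fin 4) ℚ)
      (X 2 * X 3 * (X 2 ^ (K + 1) - X 1 ^ (K + 1))) := by
  -- `finSuccEquiv` splits off `x₀` and renumbers `x₁, x₂, x₃` as `X 0, X 1, X 2`.
  set g : MvPolynomial (Fin 3) ℚ := X 1 * X 2 * (X 1 ^ (K + 1) - X 0 ^ (K + 1)) with hg
  have hg_eval : aeval ![(0 : ℚ), 1, 1] g = 1 := by simp [g]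
  have hX_not_dvd : ¬ (X 0 : MvPolynomial (Fin 3) ℚ) ∣ g := fun h => by
    simpa [hg_eval] using map_dvd (aeval ![(0 : ℚ), 1, 1]) h
  have key := Polynomial.isRelPrime_C_mul_X_add_C_C (b := X 1 ^ (K + 3) + X 1 ^ (K + 2) * X 2)
    (c := g) ((X_prime.irreducible.isRelPrime_iff_not_dvd.mpr hX_not_dvd).pow_left (m := K + 2))
    (fun h => by simp [h] at hg_eval)
  refine .of_map (finSuccEquiv ℚ 3) ?_
  have e1 : finSuccEquiv ℚ 3 (X 1) = Polynomial.C (X 0) := finSuccEquiv_X_succ (j := 0)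
  have e2 : finSuccEquiv ℚ 3 (X 2) = Polynomial.C (X 1) := finSuccEquiv_X_succ (j := 1)
  have e3 : finSuccEquiv ℚ 3 (X 3) = Polynomial.C (X 2) := finSuccEquiv_X_succ (j := 2)
  convert key using 1
  · simp only [map_add, map_mul, map_pow, finSuccEquiv_X_zero, e1, e2, e3]
    ring
  · simp only [map_sub, map_mul, map_pow, e1, e2, e3, hg]
end

section
/- Over a field k of characteristic 0, consider the regular sequence σ = (x_0, x_3²) in k[x_0,x_1,x_2,x_3]. For any linear form h = ax_0+bx_1+cx_2+dx_3 and nonzero scalars α, β, the kernel of the Jacobian matrix of σ' = (αx_0, x_0h + βx_3²) is a free module of rank 2; more precisely, if b = c = 0 it is generated by two degree-0 syzygies (0,1,0,0) and (0,0,1,0), and otherwise it is generated by one degree-0 and one degree-1 syzygy. -/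
/-!
The Jacobian of `σ'` has rows `(α, 0, 0, 0)` and `(∂₀, b x₀, c x₀, g)` with `g = d x₀ + 2β x₃`,
so its kernel consists of the `(0, y₁, y₂, y₃)` with `x₀ (b y₁ + c y₂) + g y₃ = 0`.
As `x₀` is prime and does not divide `g` (its `x₃`-coefficient `2β` is nonzero), `y₃ = x₀ w` and
`b y₁ + c y₂ + g w = 0`; this last equation is solved for `y₂` or `y₁`, whichever has a
nonzero coefficient, and when `b = c = 0` it just forces `w = 0`.
-/

open MvPolynomial

section Syzygies

variable {R : Type*} [CommRing R] [IsDomain R]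

theorem exists_eq_mul_of_mul_add_mul_eq_zero {p g x y : R} (hp : Prime p) (hg : ¬p ∣ g)
    (h : p * x + g * y = 0) : ∃ w, y = p * w ∧ x + g * w = 0 := by
  obtain ⟨w, hw⟩ : p ∣ y :=
    (hp.dvd_or_dvd ⟨-x, by linear_combination h⟩).resolve_left hg
  refine ⟨w, hw, mul_left_cancel₀ hp.ne_zero ?_⟩
  linear_combination h - g * hw

theorem LinearIndependent.pair_of_apply_eq_zero {ι : Type*} {v w : ι → R} {i j : ι}
    (hvi : v i ≠ 0) (hvj : v j = 0) (hwj : w j ≠ 0) : LinearIndependent R ![v, w] := by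
  refine LinearIndependent.pair_iff.2 fun s t hst => ?_
  have ht : t = 0 := by simpa [hvj, hwj] using congrFun hst j
  subst ht
  exact ⟨by simpa [hvi] using congrFun hst i, rfl⟩

variable {p e f g : R} {N : Submodule R (Fin 4 → R)}

theorem eq_span_of_mem_iff_of_eq_zero (hg : g ≠ 0) (he : e = 0) (hf : f = 0)
    (hN : ∀ v, v ∈ N ↔ v 0 = 0 ∧ e * p * v 1 + f * p * v 2 + g * v 3 = 0) :
    N = Submodule.span R {![0, 1, 0, 0], ![0, 0, 1, 0]} := by
  subst he hf
  ext v
  rw [hN, Submodule.mem_span_pair]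
  constructor
  · rintro ⟨h0, h3⟩
    have h3 : v 3 = 0 := by simpa [hg] using h3
    refine ⟨v 1, v 2, ?_⟩
    ext i; fin_cases i <;> simp [h0, h3]
  · rintro ⟨s, t, rfl⟩
    simp

theorem eq_span_of_mem_iff_of_isUnit_right (hp : Prime p) (hg : ¬p ∣ g) (hf : IsUnit f)
    (hN : ∀ v, v ∈ N ↔ v 0 = 0 ∧ e * p * v 1 + f * p * v 2 + g * v 3 = 0) :
    N = Submodule.span R {![0, -f, e, 0], ![0, 0, g, -(f * p)]} := by
  obtain ⟨u, rfl⟩ := hf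
  ext v
  rw [hN, Submodule.mem_span_pair]
  constructor
  · rintro ⟨h0, h⟩
    obtain ⟨w, hw, hsyz⟩ : ∃ w, v 3 = p * w ∧ e * v 1 + u * v 2 + g * w = 0 :=
      exists_eq_mul_of_mul_add_mul_eq_zero hp hg (by linear_combination h)
    refine ⟨-(↑u⁻¹ * v 1), -(↑u⁻¹ * w), ?_⟩
    funext i
    fin_cases i <;> simp only [Fin.zero_eta, Fin.mk_one, Fin.reduceFinMk, Matrix.cons_val_zero,
      Matrix.cons_val_one, Matrix.cons_val, Pi.add_apply, Pi.smul_apply, smul_eq_mul]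
    · linear_combination -h0
    · linear_combination v 1 * u.inv_mul
    · linear_combination -↑u⁻¹ * hsyz + v 2 * u.inv_mul
    · linear_combination -hw + p * w * u.inv_mul
  · rintro ⟨s, t, rfl⟩
    refine ⟨by simp, ?_⟩
    simp only [Matrix.cons_val_one, Matrix.cons_val, Pi.add_apply, Pi.smul_apply, smul_eq_mul]
    ring

theorem eq_span_of_mem_iff_of_isUnit_left (hp : Prime p) (hg : ¬p ∣ g) (he : IsUnit e)
    (hN : ∀ v, v ∈ N ↔ v 0 = 0 ∧ e * p * v 1 + f * p * v 2 + g * v 3 = 0) :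
    N = Submodule.span R {![0, -f, e, 0], ![0, g, 0, -(e * p)]} := by
  obtain ⟨u, rfl⟩ := he
  ext v
  rw [hN, Submodule.mem_span_pair]
  constructor
  · rintro ⟨h0, h⟩
    obtain ⟨w, hw, hsyz⟩ : ∃ w, v 3 = p * w ∧ u * v 1 + f * v 2 + g * w = 0 :=
      exists_eq_mul_of_mul_add_mul_eq_zero hp hg (by linear_combination h)
    refine ⟨↑u⁻¹ * v 2, -(↑u⁻¹ * w), ?_⟩
    funext i
    fin_cases i <;> simp only [Fin.zero_eta, Fin.mk_one, Fin.reduceFinMk, Matrix.cons_val_zero,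
      Matrix.cons_val_one, Matrix.cons_val, Pi.add_apply, Pi.smul_apply, smul_eq_mul]
    · linear_combination -h0
    · linear_combination -↑u⁻¹ * hsyz + v 1 * u.inv_mul
    · linear_combination v 2 * u.inv_mul
    · linear_combination -hw + p * w * u.inv_mul
  · rintro ⟨s, t, rfl⟩
    refine ⟨by simp, ?_⟩
    simp only [Matrix.cons_val_one, Matrix.cons_val, Pi.add_apply, Pi.smul_apply, smul_eq_mul]
    ring

end Syzygies

theorem mem_ker_mulVecLin_of_pivot_row {S : Type*} [CommRing S] [NoZeroDivisors S]
    {u : S} (hu : u ≠ 0) (ℓ e f g : S) (v : Fin 4 → S) :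
    v ∈ LinearMap.ker (!![u, 0, 0, 0; ℓ, e, f, g]).mulVecLin ↔
      v 0 = 0 ∧ e * v 1 + f * v 2 + g * v 3 = 0 := by
  simp only [LinearMap.mem_ker, Matrix.mulVecLin_apply, Matrix.cons_mulVec, dotProduct,
    Fin.sum_univ_four, Matrix.cons_val_zero, Matrix.cons_val_one, Matrix.cons_val, zero_mul,
    add_zero, Matrix.empty_mulVec, Matrix.cons_eq_zero_iff, mul_eq_zero, hu, false_or,
    Matrix.zero_empty, and_true]
  exact and_congr_right fun h0 => by rw [h0, mul_zero, zero_add, add_assoc]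

theorem jacobian_eq {R : Type*} [CommRing R] (a b c d α β : R) :
    Matrix.of ![fun j => pderiv j (C α * X 0),
      fun j => pderiv j (X 0 * (C a * X 0 + C b * X 1 + C c * X 2 + C d * X 3) + C β * X 3 ^ 2)] =
    !![C α, 0, 0, 0;
      C (2 * a) * X 0 + C b * X 1 + C c * X 2 + C d * X 3, C b * X 0, C c * X 0,
        C d * X 0 + C (2 * β) * X 3] := by
  refine Matrix.ext fun i j => ?_
  fin_cases i <;> fin_cases j <;> simp [pderiv_X, C_mul, map_ofNat] <;> ring

theorem not_X_dvd_C_mul_X_add_C_mul_X {R σ : Type*} [CommRing R] [IsDomain R] {i j : σ}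
    (hij : i ≠ j) (d : R) {e : R} (he : e ≠ 0) : ¬X i ∣ C d * X i + C e * X j := by
  rw [dvd_add_right (dvd_mul_left _ _), X_dvd_mul_iff, X_dvd_X, ← monomial_zero', X_dvd_monomial]
  simp [he, hij]

theorem isHomogeneous_vecCons_four {σ R : Type*} [CommSemiring R] {n : ℕ}
    {p₀ p₁ p₂ p₃ : MvPolynomial σ R} (h₀ : p₀.IsHomogeneous n) (h₁ : p₁.IsHomogeneous n)
    (h₂ : p₂.IsHomogeneous n) (h₃ : p₃.IsHomogeneous n) :
    ∀ i, (![p₀, p₁, p₂, p₃] i).IsHomogeneous n := by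
  intro i
  fin_cases i <;> assumption

/-- For `σ' = (αx₀, x₀h + βx₃²)` with `h = ax₀+bx₁+cx₂+dx₃` and `α,β ≠ 0`, the
kernel of the Jacobian matrix is free of rank 2: if `b = c = 0` it is generated
by the degree-0 syzygies `(0,1,0,0)` and `(0,0,1,0)`, and otherwise by one
degree-0 and one degree-1 syzygy. -/
theorem stmt_19 {k : Type*} [Field k] [CharZero k]
    (a b c d α β : k) (hα : α ≠ 0) (hβ : β ≠ 0) :
    let J : Matrix (Fin 2) (Fin 4) (MvPolynomial (Fin 4) k) :=
      Matrix.of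
        ![fun j => pderiv j (C α * X 0),
          fun j => pderiv j
            (X 0 * (C a * X 0 + C b * X 1 + C c * X 2 + C d * X 3) + C β * X 3 ^ 2)]
    (b = 0 ∧ c = 0 →
      LinearMap.ker J.mulVecLin =
        Submodule.span (MvPolynomial (Fin 4) k)
          ({![0, 1, 0, 0], ![0, 0, 1, 0]} : Set (Fin 4 → MvPolynomial (Fin 4) k)) ∧
      LinearIndependent (MvPolynomial (Fin 4) k)
        ![(![0, 1, 0, 0] : Fin 4 → MvPolynomial (Fin 4) k), ![0, 0, 1, 0]]) ∧
    (¬(b = 0 ∧ c = 0) →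
      ∃ ν₁ ν₂ : Fin 4 → MvPolynomial (Fin 4) k,
        (∀ i, (ν₁ i).IsHomogeneous 0) ∧ (∀ i, (ν₂ i).IsHomogeneous 1) ∧
        LinearMap.ker J.mulVecLin =
          Submodule.span (MvPolynomial (Fin 4) k)
            ({ν₁, ν₂} : Set (Fin 4 → MvPolynomial (Fin 4) k)) ∧
        LinearIndependent (MvPolynomial (Fin 4) k) ![ν₁, ν₂]) := by
  intro J
  rw [show J = _ from jacobian_eq a b c d α β]
  set g : MvPolynomial (Fin 4) k := C d * X 0 + C (2 * β) * X 3
  have hker := mem_ker_mulVecLin_of_pivot_row (C_ne_zero.2 hα)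
    (C (2 * a) * X 0 + C b * X 1 + C c * X 2 + C d * X 3) (C b * X 0) (C c * X 0) g
  have hg : ¬X 0 ∣ g := not_X_dvd_C_mul_X_add_C_mul_X (by decide) d (by simpa using hβ)
  have hg₀ : g ≠ 0 := by rintro h; simp [h] at hg
  have hg₁ : g.IsHomogeneous 1 := (isHomogeneous_C_mul_X d 0).add (isHomogeneous_C_mul_X _ 3)
  have h0 (n : ℕ) : (0 : MvPolynomial (Fin 4) k).IsHomogeneous n := isHomogeneous_zero _ _ _
  have hν₁ := isHomogeneous_vecCons_four (h0 0) (isHomogeneous_C (Fin 4) c).neg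
    (isHomogeneous_C _ b) (h0 0)
  refine ⟨fun ⟨hb, hc⟩ => ⟨?_, ?_⟩, fun hbc => ?_⟩
  · exact eq_span_of_mem_iff_of_eq_zero hg₀ (by rw [hb, C_0]) (by rw [hc, C_0]) hker
  · exact .pair_of_apply_eq_zero (i := 1) (j := 2) one_ne_zero rfl one_ne_zero
  by_cases hc : c = 0
  · have hb : b ≠ 0 := fun hb => hbc ⟨hb, hc⟩
    exact ⟨_, ![0, g, 0, -(C b * X 0)], hν₁,
      isHomogeneous_vecCons_four (h0 1) hg₁ (h0 1) (isHomogeneous_C_mul_X b 0).neg,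
      eq_span_of_mem_iff_of_isUnit_left X_prime hg (hb.isUnit.map C) hker,
      .pair_of_apply_eq_zero (i := 2) (j := 3) (by simpa using hb) rfl (by simpa using hb)⟩
  · exact ⟨_, ![0, 0, g, -(C c * X 0)], hν₁,
      isHomogeneous_vecCons_four (h0 1) (h0 1) hg₁ (isHomogeneous_C_mul_X c 0).neg,
      eq_span_of_mem_iff_of_isUnit_right X_prime hg ((Ne.isUnit hc).map C) hker,
      .pair_of_apply_eq_zero (i := 1) (j := 3) (by simpa using hc) rfl (by simpa using hc)⟩
end
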